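/- The generating function for the number of Schmidt type 3-fold partition diamonds satisfies ∑_{n≥0} s_3(n) q^n = ∏_{n≥1} (1 + 4q^n + q^{2n}) / (1 - q^n)^4, as an identity of formal power series in q over ℤ. -/

import Mathlib

open Finset PowerSeries

/-- A `d`-fold partition diamond: nonnegative integers `a 0, a 1, …` together with
`b k j` (representing `b_{k+1, j+1}`) satisfying `a k ≥ b k j ≥ a (k+1)`,
with all but finitely many entries equal to zero. -/
structure DFold (d : ℕ) where
  a : ℕ → ℕ
  b : ℕ → Fin d → ℕ
  upper : ∀ k j, b k j ≤ a k
  lower : ∀ k j, a (k + 1) ≤ b k j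
  fin : ∃ N, ∀ k, N ≤ k → a k = 0

/-- `sFold d n`: the number of Schmidt type `d`-fold partition diamonds of `n`
(only the links `a k` are summed). -/
noncomputable def sFold (d n : ℕ) : ℕ :=
  Set.ncard {D : DFold d | (∑ᶠ k, D.a k) = n}

/-!
A diamond is determined by the differences `c k = a k - a (k + 1)`, which satisfy
`∑ a k = ∑ (k + 1) * c k`, together with, for each `k`, the `d` entries `b k j`, each free among
the `c k + 1` values from `a (k + 1)` to `a k`. Hence `s_d(n) = ∑ ∏ₖ (c k + 1) ^ d` over the multiplicity vectors `c` of
the partitions of `n`, which is the `n`-th coefficient of `∏ₘ F(qᵐ)` with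
`F(x) = ∑ (c + 1) ^ d xᶜ`. For `d = 3`, `F(x) (1 - x) ^ 4 = 1 + 4x + x²`.
-/

theorem sum_range_eq_sum_mul_sub_add (a : ℕ → ℕ) (ha : Antitone a) (N : ℕ) :
    ∑ k ∈ range N, a k = ∑ i ∈ range N, (i + 1) * (a i - a (i + 1)) + N * a N := by
  induction N with
  | zero => simp
  | succ N ih =>
    have step : (N + 1) * (a N - a (N + 1)) + (N + 1) * a (N + 1) = (N + 1) * a N := by
      rw [← Nat.mul_add, Nat.sub_add_cancel (ha N.le_succ)]
    rw [sum_range_succ, sum_range_succ, ih]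
    linarith

section tailSum

variable {N : ℕ}

def tailSum (c : Fin N → ℕ) (k : ℕ) : ℕ :=
  ∑ i : Fin N with k ≤ i.val, c i

theorem tailSum_eq_zero (c : Fin N → ℕ) {k : ℕ} (hk : N ≤ k) : tailSum c k = 0 :=
  sum_eq_zero fun i hi => absurd ((mem_filter.1 hi).2.trans_lt i.isLt) (not_lt.2 hk)

theorem tailSum_eq_add (c : Fin N → ℕ) (i : Fin N) : tailSum c i = c i + tailSum c (i + 1) := by
  have hsplit : ∀ j : Fin N, (if (i : ℕ) ≤ j then c j else 0) =
      (if i = j then c j else 0) + (if (i : ℕ) + 1 ≤ j then c j else 0) := by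
    intro j
    by_cases h : i = j
    · subst h; simp
    · have : (i : ℕ) ≠ j := Fin.val_ne_of_ne h
      split_ifs <;> omega
  simp only [tailSum, sum_filter, hsplit, sum_add_distrib, sum_ite_eq, mem_univ, if_true]

theorem antitone_tailSum (c : Fin N → ℕ) : Antitone (tailSum c) := fun _ _ hkl =>
  sum_le_sum_of_subset fun i hi => by
    simp only [mem_filter] at hi ⊢
    exact ⟨hi.1, hkl.trans hi.2⟩

theorem tailSum_sub_tailSum (c : Fin N → ℕ) (i : Fin N) :
    tailSum c i - tailSum c (i + 1) = c i := by
  rw [tailSum_eq_add c i, Nat.add_sub_cancel]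

theorem tailSum_sub_eq {a : ℕ → ℕ} (ha : Antitone a) (haN : a N = 0) (k : ℕ) :
    tailSum (fun i : Fin N => a i - a (i + 1)) k = a k := by
  induction h : N - k generalizing k with
  | zero =>
    rw [tailSum_eq_zero _ (by omega)]
    exact (Nat.eq_zero_of_le_zero (haN ▸ ha (by omega))).symm
  | succ m ih =>
    have hk : k < N := by omega
    rw [tailSum_eq_add _ ⟨k, hk⟩, ih (k + 1) (by omega), Nat.sub_add_cancel (ha k.le_succ)]

end tailSum

/-- `c i` is the multiplicity of the part `i + 1` in a partition of `n` into parts at most `N`. -/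
def partitionMultiplicities (N n : ℕ) : Finset (Fin N → ℕ) :=
  {c ∈ Fintype.piFinset fun _ => range (n + 1) | ∑ i, (i + 1) * c i = n}

theorem mem_partitionMultiplicities {N n : ℕ} {c : Fin N → ℕ} :
    c ∈ partitionMultiplicities N n ↔ ∑ i, (i + 1) * c i = n := by
  refine ⟨fun h => (mem_filter.1 h).2, fun h => mem_filter.2 ⟨?_, h⟩⟩
  refine Fintype.mem_piFinset.2 fun i => mem_range.2 (Nat.lt_succ_of_le ?_)
  calc c i ≤ (i + 1) * c i := Nat.le_mul_of_pos_left _ i.succ_pos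
    _ ≤ ∑ i, (i + 1) * c i := single_le_sum (f := fun i : Fin N => (i + 1) * c i)
        (fun _ _ => Nat.zero_le _) (mem_univ i)
    _ = n := h

namespace DFold

variable {d : ℕ}

theorem ext {D E : DFold d} (ha : D.a = E.a) (hb : D.b = E.b) : D = E := by
  cases D; cases E; cases ha; cases hb; rfl

theorem antitone_a [NeZero d] (D : DFold d) : Antitone D.a :=
  antitone_nat_of_succ_le fun k => (D.lower k 0).trans (D.upper k 0)

theorem finsum_a_eq_sum_range (D : DFold d) {N : ℕ} (hN : ∀ k, N ≤ k → D.a k = 0) :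
    ∑ᶠ k, D.a k = ∑ k ∈ range N, D.a k :=
  finsum_eq_sum_of_support_subset _ fun k hk => by
    by_contra h
    exact hk (hN k (by simpa using h))

theorem a_eq_zero_of_finsum_le [NeZero d] (D : DFold d) {k : ℕ} (hk : ∑ᶠ i, D.a i ≤ k) :
    D.a k = 0 := by
  obtain ⟨M, hM⟩ := D.fin
  rw [D.finsum_a_eq_sum_range (N := max M (k + 1)) fun i hi => hM i (le_of_max_le_left hi)] at hk
  have hprefix : (k + 1) * D.a k ≤ ∑ i ∈ range (k + 1), D.a i := by
    simpa using card_nsmul_le_sum (range (k + 1)) D.a (D.a k)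
      fun i hi => D.antitone_a (Nat.lt_succ_iff.1 (mem_range.1 hi))
  have hsub : ∑ i ∈ range (k + 1), D.a i ≤ ∑ i ∈ range (max M (k + 1)), D.a i :=
    sum_le_sum_of_subset (range_subset_range.2 (le_max_right _ _))
  nlinarith

theorem sum_fin_mul_sub_eq_finsum [NeZero d] (D : DFold d) {N : ℕ} (hN : ∑ᶠ k, D.a k ≤ N) :
    ∑ i : Fin N, (i + 1) * (D.a i - D.a (i + 1)) = ∑ᶠ k, D.a k := by
  have hvan : ∀ k, N ≤ k → D.a k = 0 := fun k hk => D.a_eq_zero_of_finsum_le (hN.trans hk)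
  rw [Fin.sum_univ_eq_sum_range (fun i => (i + 1) * (D.a i - D.a (i + 1))),
    D.finsum_a_eq_sum_range hvan, sum_range_eq_sum_mul_sub_add _ D.antitone_a, hvan N le_rfl,
    mul_zero, add_zero]

variable {N : ℕ}

def ofMultiplicities (c : Fin N → ℕ) (t : ∀ i, Fin d → Fin (c i + 1)) : DFold d where
  a := tailSum c
  b k j := if h : k < N then tailSum c (k + 1) + t ⟨k, h⟩ j else 0
  upper k j := by
    split_ifs with h
    · rw [tailSum_eq_add c ⟨k, h⟩, add_comm]
      exact Nat.add_le_add_right (Fin.is_le _) _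
    · exact Nat.zero_le _
  lower k j := by
    split_ifs with h
    · exact Nat.le_add_right _ _
    · exact (tailSum_eq_zero c (by omega)).le
  fin := ⟨N, fun _ => tailSum_eq_zero c⟩

theorem finsum_ofMultiplicities (c : Fin N → ℕ) (t : ∀ i, Fin d → Fin (c i + 1)) :
    ∑ᶠ k, (ofMultiplicities c t).a k = ∑ i : Fin N, (i + 1) * c i := by
  rw [finsum_a_eq_sum_range _ fun k => tailSum_eq_zero c, ofMultiplicities,
    sum_range_eq_sum_mul_sub_add _ (antitone_tailSum c), tailSum_eq_zero c le_rfl, mul_zero,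
    add_zero, ← Fin.sum_univ_eq_sum_range (fun i => (i + 1) * (tailSum c i - tailSum c (i + 1)))]
  simp only [tailSum_sub_tailSum]

end DFold

theorem sigma_ext_of_val_eq {N d : ℕ} {S : Finset (Fin N → ℕ)}
    {x y : Σ c : S, ∀ i, Fin d → Fin (c.1 i + 1)} (h₁ : x.1 = y.1)
    (h₂ : ∀ i j, (x.2 i j : ℕ) = y.2 i j) : x = y := by
  obtain ⟨c, t⟩ := x
  obtain ⟨c', t'⟩ := y
  cases h₁
  congr
  funext i j
  exact Fin.ext (h₂ i j)

def DFold.equivSigmaMultiplicities {d N n : ℕ} [NeZero d] (hnN : n ≤ N) :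
    {D : DFold d // ∑ᶠ k, D.a k = n} ≃
      Σ c : partitionMultiplicities N n, ∀ i, Fin d → Fin (c.1 i + 1) where
  toFun D :=
    ⟨⟨fun i => D.1.a i - D.1.a (i + 1), mem_partitionMultiplicities.2
        ((D.1.sum_fin_mul_sub_eq_finsum (D.2.trans_le hnN)).trans D.2)⟩,
      fun i j => ⟨D.1.b i j - D.1.a (i + 1),
        Nat.lt_succ_of_le (Nat.sub_le_sub_right (D.1.upper i j) _)⟩⟩
  invFun x := ⟨DFold.ofMultiplicities x.1.1 x.2,
    (DFold.finsum_ofMultiplicities _ _).trans (mem_partitionMultiplicities.1 x.1.2)⟩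
  left_inv := by
    rintro ⟨D, hD⟩
    have hvan : ∀ k, N ≤ k → D.a k = 0 :=
      fun k hk => D.a_eq_zero_of_finsum_le (hD.trans_le (hnN.trans hk))
    have ha : tailSum (fun i : Fin N => D.a i - D.a (i + 1)) = D.a :=
      funext (tailSum_sub_eq D.antitone_a (hvan N le_rfl))
    refine Subtype.ext (DFold.ext ha (funext fun k => funext fun j => ?_))
    simp only [DFold.ofMultiplicities]
    split_ifs with hk
    · have := D.lower k j
      rw [congrFun ha]
      omega
    · have := D.upper k j
      rw [hvan k (by omega)] at this
      omega
  right_inv := by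
    rintro ⟨⟨c, _⟩, t⟩
    refine sigma_ext_of_val_eq (Subtype.ext (funext (tailSum_sub_tailSum c))) fun i j => ?_
    simp [DFold.ofMultiplicities]

theorem sFold_eq_sum_partitionMultiplicities {d N n : ℕ} [NeZero d] (hnN : n ≤ N) :
    sFold d n = ∑ c ∈ partitionMultiplicities N n, ∏ i, (c i + 1) ^ d := by
  rw [sFold, ← Nat.card_coe_set_eq, Set.coe_ofPred,
    Nat.card_congr (DFold.equivSigmaMultiplicities hnN), Nat.card_eq_fintype_card,
    Fintype.card_sigma]
  simpa using sum_coe_sort _ fun c : Fin N → ℕ => ∏ i, (c i + 1) ^ d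

theorem coeff_prod_expand {R : Type*} [CommRing R] {N : ℕ} (φ : Fin N → R⟦X⟧) (n : ℕ) :
    coeff n (∏ i : Fin N, expand (i + 1) (i : ℕ).succ_ne_zero (φ i)) =
      ∑ c ∈ partitionMultiplicities N n, ∏ i, coeff (c i) (φ i) := by
  rw [coeff_prod]
  symm
  refine sum_of_injOn (fun c => Finsupp.equivFunOnFinite.symm fun i => (i + 1) * c i) ?_ ?_ ?_ ?_
  · intro c _ c' _ h
    funext i
    simpa using congr($h i)
  · intro c hc
    simpa [mem_partitionMultiplicities] using hc
  · intro l hl hnot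
    obtain ⟨i, hi⟩ : ∃ i : Fin N, ¬ (i + 1 : ℕ) ∣ l i := by
      by_contra! hdvd
      refine hnot ⟨fun i => l i / (i + 1), ?_, ?_⟩
      · rw [mem_coe, mem_partitionMultiplicities]
        simp only [Nat.mul_div_cancel' (hdvd _)]
        simpa using (mem_finsuppAntidiag.1 hl).1
      · ext i
        simp [Nat.mul_div_cancel' (hdvd i)]
    exact prod_eq_zero (mem_univ i) (coeff_expand_of_not_dvd _ _ _ hi)
  · intro c _
    simp [coeff_expand_mul]

theorem coeff_prod_expand_mk_add_one_pow {R : Type*} [CommRing R] {d N n : ℕ} [NeZero d]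
    (hnN : n ≤ N) :
    coeff n (∏ i : Fin N,
      expand (i + 1) (i : ℕ).succ_ne_zero (mk fun c : ℕ => ((c : R) + 1) ^ d)) = sFold d n := by
  rw [coeff_prod_expand, sFold_eq_sum_partitionMultiplicities hnN]
  simp [coeff_mk]

theorem mk_add_one_pow_three_mul_one_sub_X_pow_four {R : Type*} [CommRing R] :
    (mk fun c : ℕ => ((c : R) + 1) ^ 3) * (1 - X) ^ 4 = 1 + 4 * X + X ^ 2 := by
  have expand4 : ∀ f : R⟦X⟧, f * (1 - X) ^ 4 =
      f - C 4 * (f * X ^ 1) + C 6 * (f * X ^ 2) - C 4 * (f * X ^ 3) + f * X ^ 4 := fun f => by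
    simp only [map_ofNat]; ring
  ext n
  rw [expand4, show (4 : R⟦X⟧) = C 4 from (map_ofNat C 4).symm]
  simp only [map_add, map_sub, coeff_C_mul, coeff_mul_X_pow', coeff_mk, coeff_one, coeff_X,
    coeff_X_pow]
  match n with
  | 0 | 1 | 2 | 3 => norm_num
  | n + 4 =>
    simp only [le_add_self, if_true, Nat.reduceSubDiff, Nat.add_sub_cancel, Nat.reduceEqDiff,
      if_false]
    -- the fourth difference of a cubic vanishes
    push_cast
    ring

theorem prod_Icc_one_eq_prod_fin {M : Type*} [CommMonoid M] (f : ℕ → M) (N : ℕ) :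
    ∏ m ∈ Icc 1 N, f m = ∏ i : Fin N, f (i + 1) := by
  rw [Fin.prod_univ_eq_prod_range (fun i => f (i + 1)), ← Ico_add_one_right_eq_Icc,
    prod_Ico_eq_prod_range]
  simp [add_comm]

/-- Read coefficient-wise after clearing denominators: the `n`-th coefficient of either side of
the infinite-product identity only involves the factors with `m ≤ N` for any `N ≥ n`. -/
theorem schmidt_threefold_generating_function (n N : ℕ) (hnN : n ≤ N) :
    PowerSeries.coeff (R := ℤ) n
        ((PowerSeries.mk fun m => (sFold 3 m : ℤ)) *
          ∏ m ∈ Finset.Icc 1 N, (1 - (X : ℤ⟦X⟧) ^ m) ^ 4) =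
      PowerSeries.coeff (R := ℤ) n
        (∏ m ∈ Finset.Icc 1 N,
          (1 + 4 * (X : ℤ⟦X⟧) ^ m + (X : ℤ⟦X⟧) ^ (2 * m))) := by
  set F : ℤ⟦X⟧ := mk fun c : ℕ => ((c : ℤ) + 1) ^ 3
  have hlow : ∀ m ≤ n, coeff m (mk fun m => (sFold 3 m : ℤ)) =
      coeff m (∏ i : Fin N, expand (i + 1) (i : ℕ).succ_ne_zero F) := fun m hm => by
    rw [coeff_mk, coeff_prod_expand_mk_add_one_pow (hm.trans hnN)]
  calc coeff n ((mk fun m => (sFold 3 m : ℤ)) * ∏ m ∈ Icc 1 N, (1 - (X : ℤ⟦X⟧) ^ m) ^ 4)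
      = coeff n ((∏ i : Fin N, expand (i + 1) (i : ℕ).succ_ne_zero F) *
          ∏ m ∈ Icc 1 N, (1 - (X : ℤ⟦X⟧) ^ m) ^ 4) := by
        simp only [coeff_mul]
        exact sum_congr rfl fun p hp => by rw [hlow p.1 (HasAntidiagonal.antidiagonal.fst_le hp)]
    _ = coeff n (∏ i : Fin N, expand (i + 1) (i : ℕ).succ_ne_zero (F * (1 - X) ^ 4)) := by
        simp [prod_Icc_one_eq_prod_fin, prod_mul_distrib]
    _ = _ := by
        rw [mk_add_one_pow_three_mul_one_sub_X_pow_four, prod_Icc_one_eq_prod_fin]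
        simp [map_ofNat, ← pow_mul, mul_comm]
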